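/- The loading L(G) of an incidence hypergraph G embeds into G̃: there is a unique monomorphism ψ : L(G) → G̃ with ψ ∘ j_G = η_G, and its image is the unique minimal injective subhypergraph of G̃ containing the image of G under η_G. -/

import Mathlib

open CategoryTheory Limits

/-- An incidence hypergraph: vertices, edges, incidences, and two structure maps. -/
structure IncHG : Type 1 where
  V : Type
  E : Type
  I : Type
  vmap : I → V
  emap : I → E

/-- A homomorphism of incidence hypergraphs. -/
@[ext]
structure IncHG.Hom (G H : IncHG) where
  fV : G.V → H.V
  fE : G.E → H.E
  fI : G.I → H.I
  comm_v : ∀ i, H.vmap (fI i) = fV (G.vmap i)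
  comm_e : ∀ i, H.emap (fI i) = fE (G.emap i)

instance : Category IncHG where
  Hom := IncHG.Hom
  id G := ⟨id, id, id, fun _ => rfl, fun _ => rfl⟩
  comp f g := ⟨g.fV ∘ f.fV, g.fE ∘ f.fE, g.fI ∘ f.fI,
    fun i => by simp [IncHG.Hom.comm_v], fun i => by simp [IncHG.Hom.comm_e]⟩
  id_comp f := rfl
  comp_id f := rfl
  assoc f g h := rfl

/-- The extension `G̃` of `G`. -/
def tildeIH (G : IncHG) : IncHG where
  V := Option G.V
  E := Option G.E
  I := G.I ⊕ (Option G.V × Option G.E)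
  vmap := fun a => match a with | .inl i => some (G.vmap i) | .inr p => p.1
  emap := fun a => match a with | .inl i => some (G.emap i) | .inr p => p.2

/-- The canonical inclusion `η_G : G ⟶ G̃`. -/
def etaIH (G : IncHG) : G ⟶ tildeIH G :=
  ⟨some, some, Sum.inl, fun _ => rfl, fun _ => rfl⟩

/-- Vertex set of the loading. -/
def loadV (G : IncHG) : Type := G.V ⊕ PLift (IsEmpty G.V)

/-- Edge set of the loading. -/
def loadE (G : IncHG) : Type := G.E ⊕ PLift (IsEmpty G.E)

/-- The loading `L(G)`. -/
def loadIH (G : IncHG) : IncHG where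
  V := loadV G
  E := loadE G
  I := G.I ⊕ {p : loadV G × loadE G //
        ¬ ∃ i : G.I, Sum.inl (G.vmap i) = p.1 ∧ Sum.inl (G.emap i) = p.2}
  vmap := fun a => match a with | .inl i => .inl (G.vmap i) | .inr p => p.1.1
  emap := fun a => match a with | .inl i => .inl (G.emap i) | .inr p => p.1.2

/-- The canonical inclusion `j_G : G ⟶ L(G)`. -/
def jIH (G : IncHG) : G ⟶ loadIH G :=
  ⟨Sum.inl, Sum.inl, Sum.inl, fun _ => rfl, fun _ => rfl⟩

/-- A subhypergraph of `G`. -/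
structure IncHG.Sub (G : IncHG) where
  V' : Set G.V
  E' : Set G.E
  I' : Set G.I
  closed_v : ∀ i ∈ I', G.vmap i ∈ V'
  closed_e : ∀ i ∈ I', G.emap i ∈ E'

/-- A subhypergraph is injective when it has a vertex, an edge, and an incidence
between each of its vertex-edge pairs. -/
def IncHG.Sub.Inj {G : IncHG} (K : IncHG.Sub G) : Prop :=
  K.V'.Nonempty ∧ K.E'.Nonempty ∧
    ∀ v ∈ K.V', ∀ e ∈ K.E', ∃ i ∈ K.I', G.vmap i = v ∧ G.emap i = e

/-- The image subhypergraph of a morphism. -/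
def imSub {A B : IncHG} (ψ : A ⟶ B) : IncHG.Sub B where
  V' := Set.range (IncHG.Hom.fV ψ)
  E' := Set.range (IncHG.Hom.fE ψ)
  I' := Set.range (IncHG.Hom.fI ψ)
  closed_v := by rintro i ⟨j, rfl⟩; exact ⟨A.vmap j, (IncHG.Hom.comm_v ψ j).symm⟩
  closed_e := by rintro i ⟨j, rfl⟩; exact ⟨A.emap j, (IncHG.Hom.comm_e ψ j).symm⟩

/-!
`L(G)` sits inside `G̃` by sending the old vertices, edges and incidences to themselves, an added
vertex or edge to the new vertex or edge of `G̃`, and an added incidence over `(v, e)` to the new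
incidence of `G̃` over the images of `v` and `e`. Commuting with `η_G` forces this map: an added
vertex or edge exists only when `G` has none, so it can only go to the new one, and an added
incidence cannot go to an old incidence, whose endpoints would then be an already incident pair.
Its image is injective because every pair of its vertices and edges is incident in `L(G)`, and
any injective subhypergraph containing `η_G(G)` contains it: it contains the new vertex (edge)
whenever `G` has no vertex (edge), and then the incidence of `G̃` over each pair, which for a
pair not incident in `G` can only be the new one.
-/

namespace Sum

variable {α β : Type*}

theorem getLeft?_injective [Subsingleton β] :
    Function.Injective (getLeft? : α ⊕ β → Option α) := by
  rintro (a | b) (a' | b') h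
  · simpa using h
  · simp at h
  · simp at h
  · rw [Subsingleton.elim b b']

theorem eq_getLeft?_of_apply_inl {f : α ⊕ β → Option α} (hβ : β → IsEmpty α)
    (hf : ∀ a, f (inl a) = some a) : f = getLeft? := by
  funext x
  rcases x with a | b
  · exact hf a
  · have := hβ b
    exact Subsingleton.elim _ _

theorem range_getLeft?_subset {S : Set (Option α)} (hβ : β → IsEmpty α) (hS : S.Nonempty)
    (hsome : Set.range some ⊆ S) : Set.range (getLeft? : α ⊕ β → Option α) ⊆ S := by
  rintro _ ⟨a | b, rfl⟩
  · exact hsome ⟨a, rfl⟩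
  · have := hβ b
    obtain ⟨o, ho⟩ := hS
    rwa [Subsingleton.elim o] at ho

end Sum

namespace IncHG

theorem Hom.mono_of_injective {A B : IncHG} (f : A ⟶ B) (hV : Function.Injective f.fV)
    (hE : Function.Injective f.fE) (hI : Function.Injective f.fI) : Mono f where
  right_cancellation g h hgh := by
    refine Hom.ext (funext fun x => ?_) (funext fun x => ?_) (funext fun x => ?_)
    · exact hV (congrFun (congrArg Hom.fV hgh) x)
    · exact hE (congrFun (congrArg Hom.fE hgh) x)
    · exact hI (congrFun (congrArg Hom.fI hgh) x)

end IncHG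

theorem imSub_comp_subset {A B C : IncHG} (f : A ⟶ B) (g : B ⟶ C) :
    (imSub (f ≫ g)).V' ⊆ (imSub g).V' ∧ (imSub (f ≫ g)).E' ⊆ (imSub g).E' ∧
      (imSub (f ≫ g)).I' ⊆ (imSub g).I' :=
  ⟨Set.range_comp_subset_range f.fV g.fV, Set.range_comp_subset_range f.fE g.fE,
    Set.range_comp_subset_range f.fI g.fI⟩

section Loading

variable (G : IncHG)

instance : Nonempty (loadIH G).V := by
  cases isEmpty_or_nonempty G.V
  · exact ⟨.inr ⟨‹_›⟩⟩
  · exact ⟨.inl (Classical.arbitrary _)⟩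

instance : Nonempty (loadIH G).E := by
  cases isEmpty_or_nonempty G.E
  · exact ⟨.inr ⟨‹_›⟩⟩
  · exact ⟨.inl (Classical.arbitrary _)⟩

def loadToTilde : loadIH G ⟶ tildeIH G where
  fV := Sum.getLeft?
  fE := Sum.getLeft?
  fI := Sum.map id fun p => (Sum.getLeft? p.1.1, Sum.getLeft? p.1.2)
  comm_v := by rintro (i | p) <;> rfl
  comm_e := by rintro (i | p) <;> rfl

theorem jIH_comp_loadToTilde : jIH G ≫ loadToTilde G = etaIH G := rfl

instance : Mono (loadToTilde G) :=
  IncHG.Hom.mono_of_injective _ Sum.getLeft?_injective Sum.getLeft?_injective <|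
    Sum.map_injective.2 ⟨Function.injective_id,
      (Sum.getLeft?_injective.prodMap Sum.getLeft?_injective).comp Subtype.val_injective⟩

variable {G}

theorem tildeIH_eq_inr_of_not_exists {a : loadV G} {b : loadE G}
    (hab : ¬ ∃ i : G.I, Sum.inl (G.vmap i) = a ∧ Sum.inl (G.emap i) = b) {x : (tildeIH G).I}
    (hv : (tildeIH G).vmap x = Sum.getLeft? a) (he : (tildeIH G).emap x = Sum.getLeft? b) :
    x = .inr (Sum.getLeft? a, Sum.getLeft? b) := by
  rcases x with j | q
  · exact (hab ⟨j, (Sum.getLeft?_eq_some_iff.1 hv.symm).symm,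
      (Sum.getLeft?_eq_some_iff.1 he.symm).symm⟩).elim
  · exact congrArg Sum.inr (Prod.ext hv he)

theorem eq_loadToTilde_of_comp_eq {ψ : loadIH G ⟶ tildeIH G} (h : jIH G ≫ ψ = etaIH G) :
    ψ = loadToTilde G := by
  have hV : ψ.fV = Sum.getLeft? :=
    Sum.eq_getLeft?_of_apply_inl PLift.down fun v => congrFun (congrArg IncHG.Hom.fV h) v
  have hE : ψ.fE = Sum.getLeft? :=
    Sum.eq_getLeft?_of_apply_inl PLift.down fun e => congrFun (congrArg IncHG.Hom.fE h) e
  refine IncHG.Hom.ext hV hE (funext ?_)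
  rintro (i | ⟨p, hp⟩)
  · exact congrFun (congrArg IncHG.Hom.fI h) i
  · exact tildeIH_eq_inr_of_not_exists hp ((ψ.comm_v _).trans (congrFun hV _))
      ((ψ.comm_e _).trans (congrFun hE _))

theorem imSub_loadToTilde_inj : (imSub (loadToTilde G)).Inj := by
  refine ⟨Set.range_nonempty _, Set.range_nonempty _, ?_⟩
  rintro _ ⟨a, rfl⟩ _ ⟨b, rfl⟩
  by_cases hab : ∃ i : G.I, Sum.inl (G.vmap i) = a ∧ Sum.inl (G.emap i) = b
  · obtain ⟨i, rfl, rfl⟩ := hab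
    exact ⟨.inl i, ⟨.inl i, rfl⟩, rfl, rfl⟩
  · exact ⟨_, ⟨.inr ⟨(a, b), hab⟩, rfl⟩, rfl, rfl⟩

theorem imSub_loadToTilde_subset {K : IncHG.Sub (tildeIH G)} (hK : K.Inj)
    (hV : (imSub (etaIH G)).V' ⊆ K.V') (hE : (imSub (etaIH G)).E' ⊆ K.E')
    (hI : (imSub (etaIH G)).I' ⊆ K.I') :
    (imSub (loadToTilde G)).V' ⊆ K.V' ∧ (imSub (loadToTilde G)).E' ⊆ K.E' ∧
      (imSub (loadToTilde G)).I' ⊆ K.I' := by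
  obtain ⟨hVne, hEne, hinc⟩ := hK
  have hVK := Sum.range_getLeft?_subset PLift.down hVne hV
  have hEK := Sum.range_getLeft?_subset PLift.down hEne hE
  refine ⟨hVK, hEK, ?_⟩
  rintro _ ⟨i | ⟨⟨a, b⟩, hab⟩, rfl⟩
  · exact hI ⟨i, rfl⟩
  · obtain ⟨x, hxK, hxv, hxe⟩ := hinc _ (hVK ⟨a, rfl⟩) _ (hEK ⟨b, rfl⟩)
    rwa [tildeIH_eq_inr_of_not_exists hab hxv hxe] at hxK

end Loading

/-- There is a unique monomorphism `ψ : L(G) ⟶ G̃` with `j_G ≫ ψ = η_G`, and the image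
of any such `ψ` is the least injective subhypergraph of `G̃` containing the image of `G`
under `η_G`. -/
theorem loadIH_embeds_in_tildeIH (G : IncHG) :
    (∃! ψ : loadIH G ⟶ tildeIH G, Mono ψ ∧ jIH G ≫ ψ = etaIH G) ∧
    ∀ ψ : loadIH G ⟶ tildeIH G, Mono ψ → jIH G ≫ ψ = etaIH G →
      (imSub ψ).Inj ∧
      (imSub (etaIH G)).V' ⊆ (imSub ψ).V' ∧
      (imSub (etaIH G)).E' ⊆ (imSub ψ).E' ∧
      (imSub (etaIH G)).I' ⊆ (imSub ψ).I' ∧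
      ∀ K : IncHG.Sub (tildeIH G), K.Inj →
        (imSub (etaIH G)).V' ⊆ K.V' → (imSub (etaIH G)).E' ⊆ K.E' →
        (imSub (etaIH G)).I' ⊆ K.I' →
        (imSub ψ).V' ⊆ K.V' ∧ (imSub ψ).E' ⊆ K.E' ∧ (imSub ψ).I' ⊆ K.I' := by
  refine ⟨⟨loadToTilde G, ⟨inferInstance, jIH_comp_loadToTilde G⟩,
    fun ψ hψ => eq_loadToTilde_of_comp_eq hψ.2⟩, fun ψ _ hψ => ?_⟩
  obtain rfl := eq_loadToTilde_of_comp_eq hψ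
  obtain ⟨hV, hE, hI⟩ := imSub_comp_subset (jIH G) (loadToTilde G)
  exact ⟨imSub_loadToTilde_inj, hV, hE, hI, fun _ => imSub_loadToTilde_subset⟩
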